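/- Distributional derivative of the nonlinear flux for aggregates: let n ≥ 1, x_1 < x_2 < ⋯ < x_n real numbers, m_1, …, m_n > 0, and set S_n(x) = ∑_{i=1}^n (m_i/2) e^{−|x−x_i|} and G_n(x) = ∑_{j=1}^n m_j K'(x − x_j). Let a : ℝ → ℝ be continuous and A(x) = ∫_0^x a(s) ds. Then for every φ ∈ C_c^∞(ℝ): −∫_ℝ A(G_n(x)) φ'(x) dx = ∫_ℝ a(G_n(x)) S_n(x) φ(x) dx + ∑_{i=1}^n (A(g_i^+) − A(g_i^−)) φ(x_i), where g_i^± are the one-sided limits of G_n at x_i, namely g_i^+ = −m_i/2 + ∑_{j≠i} m_j K'(x_i − x_j) and g_i^− = +m_i/2 + ∑_{j≠i} m_j K'(x_i − x_j). Equivalently, in the sense of distributions, ∂_x(A(G_n)) = a(G_n) S_n + ∑_{i=1}^n [A(G_n)]_{x_i} δ_{x_i}, where [·]_{x_i} denotes the jump at x_i. -/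

import Mathlib

open MeasureTheory

noncomputable def Kker' (x : ℝ) : ℝ := -(1/2) * Real.sign x * Real.exp (-|x|)

noncomputable def Aanti (a : ℝ → ℝ) (x : ℝ) : ℝ := ∫ s in (0:ℝ)..x, a s

lemma kker'_pos {u : ℝ} (hu : 0 < u) : Kker' u = -(2⁻¹) * Real.exp (-u) := by
  unfold Kker'
  rw [Real.sign_of_pos hu, abs_of_pos hu]; ring

lemma kker'_neg {u : ℝ} (hu : u < 0) : Kker' u = 2⁻¹ * Real.exp u := by
  unfold Kker'
  rw [Real.sign_of_neg hu, abs_of_neg hu, neg_neg]; ring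

noncomputable def gAux (n : ℕ) (x m : Fin n → ℝ) (k : ℕ) (t : ℝ) : ℝ :=
  ∑ j, m j * (if (j:ℕ) < k then -(2⁻¹) * Real.exp (x j - t) else 2⁻¹ * Real.exp (t - x j))

noncomputable def DAux (n : ℕ) (x m : Fin n → ℝ) (k : ℕ) (t : ℝ) : ℝ :=
  ∑ j, m j * (if (j:ℕ) < k then 2⁻¹ * Real.exp (x j - t) else 2⁻¹ * Real.exp (t - x j))

lemma gAux_hasDerivAt (n : ℕ) (x m : Fin n → ℝ) (k : ℕ) (t : ℝ) :
    HasDerivAt (gAux n x m k) (DAux n x m k t) t := by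
  have : HasDerivAt (fun t => ∑ j : Fin n,
      m j * (if (j:ℕ) < k then -(2⁻¹) * Real.exp (x j - t) else 2⁻¹ * Real.exp (t - x j)))
      (∑ j : Fin n,
      m j * (if (j:ℕ) < k then 2⁻¹ * Real.exp (x j - t) else 2⁻¹ * Real.exp (t - x j))) t := by
    apply HasDerivAt.fun_sum
    intro j _
    by_cases h : (j:ℕ) < k
    · simp only [if_pos h]
      have h1 : HasDerivAt (fun t : ℝ => x j - t) (-1) t := by
        simpa using (hasDerivAt_id t).const_sub (x j)
      have h2 := (h1.exp).const_mul (m j * -(2⁻¹))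
      convert h2 using 1
      · rfl
      · ext s; ring
      · ring
    · simp only [if_neg h]
      have h1 : HasDerivAt (fun t : ℝ => t - x j) (1) t := by
        simpa using (hasDerivAt_id t).sub_const (x j)
      have h2 := (h1.exp).const_mul (m j * 2⁻¹)
      convert h2 using 1
      · rfl
      · ext s; ring
      · ring
  exact this

lemma gAux_continuous (n : ℕ) (x m : Fin n → ℝ) (k : ℕ) : Continuous (gAux n x m k) := by
  apply continuous_finset_sum
  intro j _
  split_ifs <;> fun_prop

lemma DAux_continuous (n : ℕ) (x m : Fin n → ℝ) (k : ℕ) : Continuous (DAux n x m k) := by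
  apply continuous_finset_sum
  intro j _
  split_ifs <;> fun_prop

/-- On points separated from all nodes correctly, `gAux` equals `Gn`. -/
lemma gAux_eq_Gn (n : ℕ) (x m : Fin n → ℝ) (k : ℕ) (t : ℝ)
    (h : ∀ j : Fin n, ((j:ℕ) < k → x j < t) ∧ (k ≤ (j:ℕ) → t < x j)) :
    gAux n x m k t = ∑ j, m j * Kker' (t - x j) := by
  unfold gAux
  refine Finset.sum_congr rfl fun j _ => ?_
  rcases lt_or_ge (j:ℕ) k with hj | hj
  · rw [if_pos hj, kker'_pos (sub_pos.2 ((h j).1 hj)), neg_sub]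
  · rw [if_neg (not_lt.2 hj), kker'_neg (sub_neg.2 ((h j).2 hj))]

lemma DAux_eq_Sn (n : ℕ) (x m : Fin n → ℝ) (k : ℕ) (t : ℝ)
    (h : ∀ j : Fin n, ((j:ℕ) < k → x j < t) ∧ (k ≤ (j:ℕ) → t < x j)) :
    DAux n x m k t = ∑ j, (m j / 2) * Real.exp (-|t - x j|) := by
  unfold DAux
  refine Finset.sum_congr rfl fun j _ => ?_
  rcases lt_or_ge (j:ℕ) k with hj | hj
  · rw [if_pos hj, abs_of_pos (sub_pos.2 ((h j).1 hj)), neg_sub]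
    ring
  · rw [if_neg (not_lt.2 hj), abs_of_neg (sub_neg.2 ((h j).2 hj)), neg_neg]
    ring

/-- Distributional derivative of the nonlinear flux for aggregates: for
`S_n(x) = ∑ (m_i/2) e^{-|x - x_i|}` and `G_n(x) = ∑ m_j K'(x - x_j)`, one has
`∂_x(A(G_n)) = a(G_n) S_n + ∑ (A(g_i⁺) - A(g_i⁻)) δ_{x_i}` in the sense of
distributions, `g_i^±` being the one-sided limits of `G_n` at `x_i`. -/
theorem stmt12 (n : ℕ) (hn : 1 ≤ n) (x m : Fin n → ℝ)
    (hx : StrictMono x) (hm : ∀ i, 0 < m i)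
    (a : ℝ → ℝ) (ha : Continuous a)
    (Sn Gn : ℝ → ℝ) (gp gm : Fin n → ℝ)
    (hSn : Sn = fun t => ∑ i, (m i / 2) * Real.exp (-|t - x i|))
    (hGn : Gn = fun t => ∑ j, m j * Kker' (t - x j))
    (hgp : gp = fun i => -(m i) / 2 + ∑ j ∈ Finset.univ.erase i, m j * Kker' (x i - x j))
    (hgm : gm = fun i => (m i) / 2 + ∑ j ∈ Finset.univ.erase i, m j * Kker' (x i - x j)) :
    ∀ φ : ℝ → ℝ, ContDiff ℝ (⊤ : ℕ∞) φ → HasCompactSupport φ →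
      -∫ t : ℝ, Aanti a (Gn t) * deriv φ t =
        (∫ t : ℝ, a (Gn t) * Sn t * φ t) +
          ∑ i, (Aanti a (gp i) - Aanti a (gm i)) * φ (x i) := by
  intro φ hφ hφc
  -- `Aanti a` is an antiderivative of `a`
  have hA : ∀ y : ℝ, HasDerivAt (Aanti a) (a y) y := fun y =>
    intervalIntegral.integral_hasDerivAt_right (ha.intervalIntegrable _ _)
      (ha.stronglyMeasurableAtFilter _ _) ha.continuousAt
  have contA : Continuous (Aanti a) :=
    continuous_iff_continuousAt.2 fun y => (hA y).continuousAt
  have contφ' : Continuous (deriv φ) := hφ.continuous_deriv (by simp)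
  -- choose a radius R
  obtain ⟨R0, hR0⟩ := hφc.isBounded.subset_closedBall 0
  set M : ℝ := max |x ⟨0, by omega⟩| |x ⟨n - 1, by omega⟩| with hM
  set R : ℝ := 1 + max R0 M with hR
  have hxM : ∀ i : Fin n, -M ≤ x i ∧ x i ≤ M := by
    intro i
    constructor
    · have h1 : x ⟨0, by omega⟩ ≤ x i := hx.monotone (by simp [Fin.le_def])
      have : -|x ⟨0, by omega⟩| ≤ x ⟨0, by omega⟩ := neg_abs_le _
      have h2 : -M ≤ -|x ⟨0, by omega⟩| := by
        simp only [neg_le_neg_iff, hM]; exact le_max_left _ _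
      linarith
    · have h1 : x i ≤ x ⟨n - 1, by omega⟩ := hx.monotone (by simp [Fin.le_def]; omega)
      have : x ⟨n - 1, by omega⟩ ≤ |x ⟨n - 1, by omega⟩| := le_abs_self _
      have h2 : |x ⟨n - 1, by omega⟩| ≤ M := le_max_right _ _
      linarith
  have hxR : ∀ i : Fin n, -R < x i ∧ x i < R := by
    intro i
    have h := hxM i
    have h1 : M ≤ max R0 M := le_max_right _ _
    constructor <;> [nlinarith; nlinarith]
  have hφz : ∀ t : ℝ, R ≤ |t| → φ t = 0 ∧ deriv φ t = 0 := by
    intro t ht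
    have hR0R : R0 < R := by
      rw [hR]
      have := le_max_left R0 M
      linarith
    have htn : t ∉ tsupport φ := by
      intro hmem
      have := hR0 hmem
      simp only [Metric.mem_closedBall, Real.dist_eq, sub_zero] at this
      linarith
    exact ⟨image_eq_zero_of_notMem_tsupport htn,
      by
        by_contra hne
        exact htn (support_deriv_subset (by simpa using hne))⟩
  have hRpos : 0 < R := by
    have h0 : (0:ℝ) ≤ |x ⟨0, by omega⟩| := abs_nonneg _
    have : 0 ≤ M := le_trans h0 (le_max_left _ _)
    have : M ≤ max R0 M := le_max_right _ _
    nlinarith [le_max_right R0 M, le_trans h0 (le_max_left (|x ⟨0, by omega⟩|) (|x ⟨n-1, by omega⟩|))]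
  -- the partition points
  set p : ℕ → ℝ := fun k => if h : 1 ≤ k ∧ k ≤ n then x ⟨k - 1, by omega⟩ else if k = 0 then -R else R with hp
  have hp0 : p 0 = -R := by
    simp only [hp]; rw [dif_neg (by omega)]; norm_num
  have hpN : p (n + 1) = R := by
    simp only [hp]; rw [dif_neg (by omega)]; norm_num
  have hpx : ∀ k (hk : k < n), p (k + 1) = x ⟨k, hk⟩ := by
    intro k hk
    simp only [hp]
    rw [dif_pos ⟨by omega, by omega⟩]
    congr 1
  have hplt : ∀ k, k ≤ n → p k < p (k + 1) := by
    intro k hk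
    rcases Nat.eq_or_lt_of_le hk with hkn | hkn
    · subst hkn
      have h1 : p k = x ⟨k - 1, by omega⟩ := by
        simp only [hp]; rw [dif_pos ⟨by omega, le_rfl⟩]
      rw [h1, hpN]
      exact (hxR _).2
    · rw [hpx k (by omega)]
      rcases Nat.eq_zero_or_pos k with h0 | h0
      · subst h0; rw [hp0]; exact (hxR _).1
      · have h1 : p k = x ⟨k - 1, by omega⟩ := by
          simp only [hp]; rw [dif_pos ⟨h0, by omega⟩]
        rw [h1]
        exact hx (by simp [Fin.lt_def]; omega)
  -- separation of Ioo points from the nodes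
  have hsep : ∀ k, k ≤ n → ∀ t ∈ Set.Ioo (p k) (p (k + 1)),
      ∀ j : Fin n, ((j:ℕ) < k → x j < t) ∧ (k ≤ (j:ℕ) → t < x j) := by
    intro k hk t ht j
    constructor
    · intro hj
      have hk1 : 1 ≤ k := by omega
      have h1 : p k = x ⟨k - 1, by omega⟩ := by
        simp only [hp]; rw [dif_pos ⟨hk1, hk⟩]
      have h2 : x j ≤ x ⟨k - 1, by omega⟩ := hx.monotone (by simp [Fin.le_def]; omega)
      have := ht.1
      rw [h1] at this
      linarith
    · intro hj
      have hkn : k < n := lt_of_le_of_lt hj j.isLt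
      have h1 := hpx k hkn
      have h2 : x ⟨k, hkn⟩ ≤ x j := hx.monotone (by simp [Fin.le_def]; omega)
      have := ht.2
      rw [h1] at this
      linarith
  -- identification of gAux with Gn on open intervals
  have hgeq : ∀ k, k ≤ n → ∀ t ∈ Set.Ioo (p k) (p (k + 1)), gAux n x m k t = Gn t := by
    intro k hk t ht
    rw [hGn]
    exact gAux_eq_Gn n x m k t (hsep k hk t ht)
  have hDeq : ∀ k, k ≤ n → ∀ t ∈ Set.Ioo (p k) (p (k + 1)), DAux n x m k t = Sn t := by
    intro k hk t ht
    rw [hSn]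
    exact DAux_eq_Sn n x m k t (hsep k hk t ht)
  -- boundary values of gAux
  have hval_m : ∀ (k : ℕ) (hk : k < n), gAux n x m k (p (k + 1)) = gm ⟨k, hk⟩ := by
    intro k hk
    rw [hpx k hk, hgm]
    set i : Fin n := ⟨k, hk⟩ with hi
    show gAux n x m k (x i) = m i / 2 + ∑ j ∈ Finset.univ.erase i, m j * Kker' (x i - x j)
    unfold gAux
    rw [← Finset.add_sum_erase _ _ (Finset.mem_univ i)]
    congr 1
    · have hik : (i : ℕ) = k := rfl
      rw [if_neg (by omega), sub_self, Real.exp_zero]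
      ring
    · refine Finset.sum_congr rfl fun j hj => ?_
      have hji : j ≠ i := Finset.ne_of_mem_erase hj
      have hne : (j : ℕ) ≠ k := fun hh => hji (Fin.ext hh)
      rcases lt_or_ge (j : ℕ) k with h | h
      · have hlt : x j < x i := hx (by simp only [Fin.lt_def, hi]; omega)
        rw [if_pos h, kker'_pos (sub_pos.2 hlt), neg_sub]
      · have hlt : x i < x j := hx (by simp only [Fin.lt_def, hi]; omega)
        rw [if_neg (not_lt.2 h), kker'_neg (sub_neg.2 hlt)]
  have hval_p : ∀ (k : ℕ) (h1 : 1 ≤ k) (hk : k ≤ n),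
      gAux n x m k (p k) = gp ⟨k - 1, by omega⟩ := by
    intro k h1 hk
    have hpk : p k = x ⟨k - 1, by omega⟩ := by
      simp only [hp]; rw [dif_pos ⟨h1, hk⟩]
    rw [hpk, hgp]
    set i : Fin n := ⟨k - 1, by omega⟩ with hi
    show gAux n x m k (x i) = -m i / 2 + ∑ j ∈ Finset.univ.erase i, m j * Kker' (x i - x j)
    unfold gAux
    rw [← Finset.add_sum_erase _ _ (Finset.mem_univ i)]
    congr 1
    · have hik : (i : ℕ) = k - 1 := rfl
      rw [if_pos (by omega), sub_self, Real.exp_zero]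
      ring
    · refine Finset.sum_congr rfl fun j hj => ?_
      have hji : j ≠ i := Finset.ne_of_mem_erase hj
      have hne : (j : ℕ) ≠ k - 1 := fun hh => hji (Fin.ext hh)
      rcases lt_or_ge (j : ℕ) k with h | h
      · have hlt : x j < x i := hx (by simp only [Fin.lt_def, hi]; omega)
        rw [if_pos h, kker'_pos (sub_pos.2 hlt), neg_sub]
      · have hlt : x i < x j := hx (by simp only [Fin.lt_def, hi]; omega)
        rw [if_neg (not_lt.2 h), kker'_neg (sub_neg.2 hlt)]
  -- a.e. tool
  have aene : ∀ c : ℝ, ∀ᵐ t : ℝ, t ≠ c := by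
    intro c
    rw [ae_iff]
    simp only [ne_eq, not_not, Set.setOf_eq_eq_singleton]
    exact measure_singleton c
  -- congruence of interval integrals
  have hIcongr1 : ∀ k, k ≤ n →
      (∫ t in p k..p (k + 1), Aanti a (Gn t) * deriv φ t) =
        ∫ t in p k..p (k + 1), Aanti a (gAux n x m k t) * deriv φ t := by
    intro k hk
    apply intervalIntegral.integral_congr_ae
    filter_upwards [aene (p (k + 1))] with t htne htmem
    rw [Set.uIoc_of_le (hplt k hk).le] at htmem
    rw [hgeq k hk t ⟨htmem.1, lt_of_le_of_ne htmem.2 htne⟩]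
  have hIcongr2 : ∀ k, k ≤ n →
      (∫ t in p k..p (k + 1), a (Gn t) * Sn t * φ t) =
        ∫ t in p k..p (k + 1), a (gAux n x m k t) * DAux n x m k t * φ t := by
    intro k hk
    apply intervalIntegral.integral_congr_ae
    filter_upwards [aene (p (k + 1))] with t htne htmem
    rw [Set.uIoc_of_le (hplt k hk).le] at htmem
    have ht : t ∈ Set.Ioo (p k) (p (k + 1)) := ⟨htmem.1, lt_of_le_of_ne htmem.2 htne⟩
    rw [hgeq k hk t ht, hDeq k hk t ht]
  -- integrability
  have hint1 : ∀ k, k ≤ n →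
      IntervalIntegrable (fun t => Aanti a (Gn t) * deriv φ t) volume (p k) (p (k + 1)) := by
    intro k hk
    rw [intervalIntegrable_iff_integrableOn_Ioo_of_le (hplt k hk).le]
    have hc : IntervalIntegrable (fun t => Aanti a (gAux n x m k t) * deriv φ t) volume
        (p k) (p (k + 1)) :=
      ((contA.comp (gAux_continuous n x m k)).mul contφ').intervalIntegrable _ _
    rw [intervalIntegrable_iff_integrableOn_Ioo_of_le (hplt k hk).le] at hc
    exact hc.congr_fun (fun t ht => by beta_reduce; rw [hgeq k hk t ht]) measurableSet_Ioo
  have hint2 : ∀ k, k ≤ n →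
      IntervalIntegrable (fun t => a (Gn t) * Sn t * φ t) volume (p k) (p (k + 1)) := by
    intro k hk
    rw [intervalIntegrable_iff_integrableOn_Ioo_of_le (hplt k hk).le]
    have hc : IntervalIntegrable
        (fun t => a (gAux n x m k t) * DAux n x m k t * φ t) volume (p k) (p (k + 1)) :=
      (((ha.comp (gAux_continuous n x m k)).mul (DAux_continuous n x m k)).mul
        hφ.continuous).intervalIntegrable _ _
    rw [intervalIntegrable_iff_integrableOn_Ioo_of_le (hplt k hk).le] at hc
    exact hc.congr_fun (fun t ht => by beta_reduce; rw [hgeq k hk t ht, hDeq k hk t ht]) measurableSet_Ioo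
  -- integration by parts on each interval
  have key : ∀ k, k ≤ n →
      (∫ t in p k..p (k + 1), Aanti a (Gn t) * deriv φ t) =
        Aanti a (gAux n x m k (p (k + 1))) * φ (p (k + 1)) -
          Aanti a (gAux n x m k (p k)) * φ (p k) -
          ∫ t in p k..p (k + 1), a (Gn t) * Sn t * φ t := by
    intro k hk
    rw [hIcongr1 k hk, hIcongr2 k hk]
    exact intervalIntegral.integral_mul_deriv_eq_deriv_mul
      (fun t _ => (hA (gAux n x m k t)).comp t (gAux_hasDerivAt n x m k t))
      (fun t _ => (hφ.differentiable (by simp) t).hasDerivAt)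
      (((ha.comp (gAux_continuous n x m k)).mul (DAux_continuous n x m k)).intervalIntegrable _ _)
      (contφ'.intervalIntegrable _ _)
  -- outside the big interval the integrands vanish
  have habs : ∀ t : ℝ, t ∉ Set.Ioc (-R) R → R ≤ |t| := by
    intro t ht
    simp only [Set.mem_Ioc, not_and_or, not_lt, not_le] at ht
    rcases ht with h | h
    · rw [abs_of_nonpos (by linarith)]; linarith
    · rw [abs_of_pos (by linarith)]; linarith
  have hL : (∫ t : ℝ, Aanti a (Gn t) * deriv φ t) =
      ∑ k ∈ Finset.range (n + 1), ∫ t in p k..p (k + 1), Aanti a (Gn t) * deriv φ t := by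
    rw [intervalIntegral.sum_integral_adjacent_intervals fun k hk => hint1 k (by omega)]
    rw [hp0, hpN, intervalIntegral.integral_of_le (by linarith),
      setIntegral_eq_integral_of_forall_compl_eq_zero
        (fun t ht => by rw [(hφz t (habs t ht)).2, mul_zero])]
  have hRR : (∫ t : ℝ, a (Gn t) * Sn t * φ t) =
      ∑ k ∈ Finset.range (n + 1), ∫ t in p k..p (k + 1), a (Gn t) * Sn t * φ t := by
    rw [intervalIntegral.sum_integral_adjacent_intervals fun k hk => hint2 k (by omega)]
    rw [hp0, hpN, intervalIntegral.integral_of_le (by linarith),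
      setIntegral_eq_integral_of_forall_compl_eq_zero
        (fun t ht => by rw [(hφz t (habs t ht)).1, mul_zero])]
  -- boundary sums
  set B : ℕ → ℝ := fun k => Aanti a (gAux n x m k (p (k + 1))) * φ (p (k + 1)) with hB
  set C : ℕ → ℝ := fun k => Aanti a (gAux n x m k (p k)) * φ (p k) with hC
  have hBn : B n = 0 := by
    simp only [hB, hpN]
    rw [(hφz R (by rw [abs_of_pos hRpos])).1, mul_zero]
  have hC0 : C 0 = 0 := by
    simp only [hC, hp0]
    rw [(hφz (-R) (by rw [abs_of_neg (by linarith)]; linarith)).1, mul_zero]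
  have hBsum : ∑ k ∈ Finset.range (n + 1), B k = ∑ i : Fin n, Aanti a (gm i) * φ (x i) := by
    rw [Finset.sum_range_succ, hBn, add_zero, ← Fin.sum_univ_eq_sum_range (fun k => B k) n]
    refine Finset.sum_congr rfl fun i _ => ?_
    simp only [hB]
    rw [hval_m i i.isLt, hpx i i.isLt, Fin.eta]
  have hCsum : ∑ k ∈ Finset.range (n + 1), C k = ∑ i : Fin n, Aanti a (gp i) * φ (x i) := by
    rw [Finset.sum_range_succ', hC0, add_zero, ← Fin.sum_univ_eq_sum_range (fun k => C (k + 1)) n]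
    refine Finset.sum_congr rfl fun i _ => ?_
    simp only [hC]
    have h1 : p ((i : ℕ) + 1) = x i := by rw [hpx i i.isLt, Fin.eta]
    rw [hval_p ((i : ℕ) + 1) (by omega) (by omega), h1]
    have h2 : (⟨(i : ℕ) + 1 - 1, by omega⟩ : Fin n) = i := Fin.ext (by simp)
    rw [h2]
  -- final assembly
  have hmain : (∫ t : ℝ, Aanti a (Gn t) * deriv φ t) =
      (∑ i : Fin n, Aanti a (gm i) * φ (x i)) - (∑ i : Fin n, Aanti a (gp i) * φ (x i)) -
        ∫ t : ℝ, a (Gn t) * Sn t * φ t := by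
    rw [hL, hRR, ← hBsum, ← hCsum]
    rw [Finset.sum_congr rfl fun k hk => key k (by simp only [Finset.mem_range] at hk; omega)]
    rw [Finset.sum_sub_distrib, Finset.sum_sub_distrib]
  have hexp : ∑ i : Fin n, (Aanti a (gp i) - Aanti a (gm i)) * φ (x i) =
      (∑ i : Fin n, Aanti a (gp i) * φ (x i)) - ∑ i : Fin n, Aanti a (gm i) * φ (x i) := by
    rw [← Finset.sum_sub_distrib]
    exact Finset.sum_congr rfl fun i _ => by ring
  rw [hexp]
  linarith [hmain]
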